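/- Let Ω = diag(α², α, 1) with α = e^{2πi/3}. If a 3×3 complex matrix B satisfies Ω B conj(Ω) = η B with η³ = 1 and some diagonal entry of B is nonzero, then B is a diagonal matrix. -/

import Mathlib

open Matrix Complex

noncomputable section

def α : ℂ := Complex.exp (2 * Real.pi * Complex.I / 3)

def Ω : Matrix (Fin 3) (Fin 3) ℂ := Matrix.diagonal ![α ^ 2, α, 1]

/-! Entrywise, `Ω B conj(Ω) = η B` reads `ωᵢ conj(ωⱼ) Bᵢⱼ = η Bᵢⱼ`. Since the `ωᵢ` are unimodular, a
nonzero diagonal entry forces `η = 1`, and then `ωᵢ conj(ωⱼ) ≠ 1` for `ωᵢ ≠ ωⱼ` kills every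
off-diagonal entry. -/

namespace Matrix

variable {n R : Type*} [Fintype n] [DecidableEq n] [CommRing R] [StarRing R]

theorem diagonal_mul_mul_diagonal_map_star_apply (d : n → R) (B : Matrix n n R) (i j : n) :
    (diagonal d * B * (diagonal d).map (starRingEnd R)) i j = d i * star (d j) * B i j := by
  rw [diagonal_map (map_zero _), mul_diagonal, diagonal_mul]
  simp only [starRingEnd_apply]
  ring

theorem isDiag_of_diagonal_mul_mul_diagonal_map_star_eq_smul [NoZeroDivisors R] {d : n → R}
    (hd : ∀ i, star (d i) * d i = 1) (hinj : Function.Injective d) {B : Matrix n n R} {η : R}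
    (h : diagonal d * B * (diagonal d).map (starRingEnd R) = η • B) {k : n} (hk : B k k ≠ 0) :
    B.IsDiag := by
  have entry (i j : n) : d i * star (d j) * B i j = η * B i j := by
    rw [← diagonal_mul_mul_diagonal_map_star_apply, h, smul_apply, smul_eq_mul]
  have hη : η = 1 := by
    have hkk := entry k k
    rw [mul_comm (d k), hd, one_mul] at hkk
    exact (mul_right_cancel₀ hk ((one_mul _).trans hkk)).symm
  intro i j hij
  have hne : d i * star (d j) ≠ 1 := fun h1 ↦
    hij (hinj (by rw [← mul_one (d i), ← hd j, ← mul_assoc, h1, one_mul]))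
  have hzero : (d i * star (d j) - 1) * B i j = 0 := by rw [sub_mul, entry, hη]; ring
  exact (mul_eq_zero.mp hzero).resolve_left (sub_ne_zero.mpr hne)

end Matrix

theorem isPrimitiveRoot_α : IsPrimitiveRoot α 3 := by
  simpa [α] using Complex.isPrimitiveRoot_exp 3 (by norm_num)

theorem norm_α : ‖α‖ = 1 := by
  simp [α, Complex.norm_exp]

theorem injective_Ω_diag : Function.Injective ![α ^ 2, α, 1] := by
  have h1 : α ≠ 1 := isPrimitiveRoot_α.ne_one (by norm_num)
  have h2 : α ^ 2 ≠ 1 := isPrimitiveRoot_α.pow_ne_one_of_pos_of_lt (by norm_num) (by norm_num)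
  have h21 : α ^ 2 ≠ α := fun h ↦ h1 (by
    simpa [pow_two, isPrimitiveRoot_α.ne_zero (by norm_num)] using h)
  intro i j hij
  fin_cases i <;> fin_cases j <;> simp_all [eq_comm]

theorem star_mul_self_Ω_diag (i : Fin 3) : star (![α ^ 2, α, 1] i) * ![α ^ 2, α, 1] i = 1 := by
  have h : starRingEnd ℂ α * α = 1 := by
    rw [Complex.conj_mul', norm_α]; norm_num
  fin_cases i <;> simp [← mul_pow, h]

theorem stmt6_general (B : Matrix (Fin 3) (Fin 3) ℂ) (η : ℂ)
    (h : Ω * B * Ω.map (starRingEnd ℂ) = η • B)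
    (hdiag : B 0 0 ≠ 0 ∨ B 1 1 ≠ 0 ∨ B 2 2 ≠ 0) :
    ∀ i j, i ≠ j → B i j = 0 := by
  obtain ⟨k, hk⟩ : ∃ k, B k k ≠ 0 := by rcases hdiag with hk | hk | hk <;> exact ⟨_, hk⟩
  exact isDiag_of_diagonal_mul_mul_diagonal_map_star_eq_smul star_mul_self_Ω_diag
    injective_Ω_diag h hk

/-- If `Ω B conj(Ω) = η B` with `η³ = 1` and some diagonal entry of `B` is
nonzero, then `B` is diagonal. -/
theorem stmt6 (B : Matrix (Fin 3) (Fin 3) ℂ) (η : ℂ) (hη : η ^ 3 = 1)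
    (h : Ω * B * Ω.map (starRingEnd ℂ) = η • B)
    (hdiag : B 0 0 ≠ 0 ∨ B 1 1 ≠ 0 ∨ B 2 2 ≠ 0) :
    ∀ i j, i ≠ j → B i j = 0 :=
  stmt6_general B η h hdiag
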